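/- Let Γ be a bipartite distance-regular graph with diameter D ≥ 4, valency k ≥ 3, fix a vertex x, and let v be a vector in E_2*V orthogonal to s_2. Then p_i(A)v = E*_{i+2} A_i v − E*_i A_{i+2} v for 0 ≤ i ≤ D-2, and moreover p_{D-1}(A)v = 0 and p_D(A)v = 0. -/
import Mathlib


open Polynomial Finset Matrix

noncomputable section

attribute [local instance] Classical.propDecidable

/-- A bipartite distance-regular graph with diameter `D ≥ 4` and valency `k ≥ 3`:
a finite connected simple graph such that for all `h,i,j ≤ D` and all vertices `x,y`
at distance `h`, the number of vertices `z` with `∂(x,z) = i` and `∂(z,y) = j`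
is the constant `p h i j`, and `p h i j = 0` whenever `h + i + j` is odd. -/
structure BDRG (α : Type) [Fintype α] [DecidableEq α] where
  G : SimpleGraph α
  hconn : G.Connected
  D : ℕ
  hD : 4 ≤ D
  hdist : ∀ x y : α, G.dist x y ≤ D
  hdiam : ∃ x y : α, G.dist x y = D
  p : ℕ → ℕ → ℕ → ℕ
  hp : ∀ h i j : ℕ, h ≤ D → i ≤ D → j ≤ D → ∀ x y : α, G.dist x y = h →
      Nat.card {z : α // G.dist x z = i ∧ G.dist z y = j} = p h i j
  hbip : ∀ h i j : ℕ, h ≤ D → i ≤ D → j ≤ D → Odd (h + i + j) → p h i j = 0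
  hk : 3 ≤ p 0 1 1

namespace BDRG

variable {α : Type} [Fintype α] [DecidableEq α] (Γ : BDRG α)

/-- The intersection number `c_i = p^i_{1,i-1}` (with `c_0 = 0`), as a real number. -/
def c (i : ℕ) : ℝ := if i = 0 then 0 else (Γ.p i 1 (i - 1) : ℝ)

/-- The intersection number `b_i = p^i_{1,i+1}` (with `b_D = 0`), as a real number. -/
def b (i : ℕ) : ℝ := if i = Γ.D then 0 else (Γ.p i 1 (i + 1) : ℝ)

/-- The valency `k = b_0`. -/
def k : ℝ := Γ.b 0

/-- The `i`-th valency `k_i = p^0_{ii}`, as a real number. -/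
def kv (i : ℕ) : ℝ := (Γ.p 0 i i : ℝ)

/-- The polynomials `f_i` defined by `f_0 = 1`, `f_1 = λ` and
`λ f_i = b_{i-1} f_{i-1} + c_{i+1} f_{i+1}`. -/
def f : ℕ → Polynomial ℝ
  | 0 => 1
  | 1 => Polynomial.X
  | (i + 2) => Polynomial.C (Γ.c (i + 2))⁻¹ *
      (Polynomial.X * f (i + 1) - Polynomial.C (Γ.b i) * f i)

/-- The polynomials `p_i = Σ_{h ≤ i, i-h even} f_h`. -/
def pp (i : ℕ) : Polynomial ℝ :=
  ∑ h ∈ Finset.range (i + 1), if (i - h) % 2 = 0 then Γ.f h else 0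

/-- The `i`-th distance matrix of `Γ`, over `ℂ`. -/
def Amat (i : ℕ) : Matrix α α ℂ :=
  Matrix.of fun y z => if Γ.G.dist y z = i then 1 else 0

/-- The all-ones matrix. -/
def Jmat (α : Type) [Fintype α] : Matrix α α ℂ := Matrix.of fun _ _ => (1 : ℂ)

/-- `θ 0 > θ 1 > ⋯ > θ D` are the distinct eigenvalues of the adjacency matrix,
with `θ 0 = k`. -/
def IsEigenvalueSeq (θ : ℕ → ℝ) : Prop :=
  θ 0 = Γ.k ∧
  (∀ i j : ℕ, i < j → j ≤ Γ.D → θ j < θ i) ∧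
  (∀ i ≤ Γ.D, Module.End.HasEigenvalue (Matrix.mulVecLin (Γ.Amat 1)) ((θ i : ℂ))) ∧
  (∀ μ : ℂ, Module.End.HasEigenvalue (Matrix.mulVecLin (Γ.Amat 1)) μ →
    ∃ i ≤ Γ.D, μ = ((θ i : ℝ) : ℂ))

/-- The multiplicity of the eigenvalue `t`: the dimension of the corresponding
eigenspace of the adjacency matrix. -/
def m (t : ℝ) : ℕ :=
  Module.finrank ℂ (Module.End.eigenspace (Matrix.mulVecLin (Γ.Amat 1)) (t : ℂ))

/-- `E` is the primitive idempotent for the eigenvalue `t`: the orthogonal projection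
onto the `t`-eigenspace of the adjacency matrix. -/
def IsPrimitiveIdempotent (t : ℝ) (E : Matrix α α ℂ) : Prop :=
  Eᴴ = E ∧ E * E = E ∧
  ∀ v : α → ℂ, (Γ.Amat 1).mulVec v = (t : ℂ) • v ↔ E.mulVec v = v

/-- `θs` is the dual eigenvalue sequence of the matrix `E`, i.e.
`E = |X|⁻¹ Σ_{i=0}^{D} θs i • A_i`. -/
def IsDualEigSeq (E : Matrix α α ℂ) (θs : ℕ → ℝ) : Prop :=
  E = (Fintype.card α : ℂ)⁻¹ • ∑ i ∈ Finset.range (Γ.D + 1), ((θs i : ℝ) : ℂ) • Γ.Amat i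

/-- The two-variable polynomial `Ψ_i`, as a function of two real variables. -/
def Psi (i : ℕ) (lam mu : ℝ) : ℝ :=
  ∑ h ∈ Finset.range (i + 1), if (i - h) % 2 = 0 then
    (Γ.pp h).eval lam * (Γ.pp h).eval mu *
      (Γ.kv i * Γ.b i * Γ.b (i + 1)) / (Γ.kv h * Γ.b h * Γ.b (h + 1))
  else 0

/-- The index `n` is admissible: `θ_n` is one of `θ_1, θ_d, θ_{d+1}, θ_{D-1}` if `D` is
odd (`d = (D-1)/2`), and one of `θ_1, θ_{D-1}` if `D` is even. -/
def Admissible (n : ℕ) : Prop :=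
  (Odd Γ.D ∧ (n = 1 ∨ n = Γ.D / 2 ∨ n = Γ.D / 2 + 1 ∨ n = Γ.D - 1)) ∨
  (Even Γ.D ∧ (n = 1 ∨ n = Γ.D - 1))

/-- The polynomials `g_i` associated with the scalar `t`. -/
def g (t : ℝ) (i : ℕ) : Polynomial ℝ :=
  ∑ h ∈ Finset.range (i + 1), if (i - h) % 2 = 0 then
    Polynomial.C ((Γ.pp h).eval t * (Γ.kv i * Γ.b i * Γ.b (i + 1)) /
        ((Γ.pp i).eval t * (Γ.kv h * Γ.b h * Γ.b (h + 1)))) * Γ.pp h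
  else 0

/-- The dual idempotent `E_i* = E_i*(x)`. -/
def Estar (x : α) (i : ℕ) : Matrix α α ℂ :=
  Matrix.of fun y z => if y = z ∧ Γ.G.dist x y = i then 1 else 0

/-- The Hermitian inner product `⟨u,v⟩ = uᵗ v̄` on the standard module `ℂ^X`. -/
def dotp {α : Type} [Fintype α] (u v : α → ℂ) : ℂ := ∑ y, u y * (starRingEnd ℂ) (v y)

/-- The square norm `‖v‖²` with respect to the Hermitian inner product. -/
def nrmsq {α : Type} [Fintype α] (v : α → ℂ) : ℝ := ∑ y, Complex.normSq (v y)

/-- The vector `s_2 = Σ_{∂(x,y)=2} ŷ`. -/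
def s2vec (x : α) : α → ℂ := fun y => if Γ.G.dist x y = 2 then 1 else 0

/-- The scalar `ψ = b_2 (1 - b_3/(1+η))`. -/
def psi (η : ℝ) : ℝ := Γ.b 2 * (1 - Γ.b 3 / (1 + η))

/-- The scalar `θ̃ = -1 - b_2 b_3/(t² - b_2)`. -/
def tilde (t : ℝ) : ℝ := -1 - Γ.b 2 * Γ.b 3 / (t ^ 2 - Γ.b 2)

/-- The adjacency matrix of the local graph `Γ₂² = Γ₂²(x)`, whose vertices are the
vertices at distance 2 from `x`, adjacent when at distance 2 in `Γ`. -/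
def localAdj (x : α) :
    Matrix {y : α // Γ.G.dist x y = 2} {y : α // Γ.G.dist x y = 2} ℂ :=
  Matrix.of fun y z => if Γ.G.dist (y : α) (z : α) = 2 then 1 else 0

/-- `η 1, …, η k₂` enumerate the eigenvalues of the local graph `Γ₂²(x)` with their
multiplicities, ordered so that `η 1 = p²₂₂` and `η i = b₃ - 1` for `2 ≤ i ≤ k`. -/
def IsLocalEigSeq (x : α) (η : ℕ → ℝ) : Prop :=
  η 1 = (Γ.p 2 2 2 : ℝ) ∧
  (∀ i : ℕ, 2 ≤ i → i ≤ Γ.p 0 1 1 → η i = Γ.b 3 - 1) ∧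
  ∀ t : ℝ, Nat.card {i : ℕ // i ∈ Finset.Icc 1 (Γ.p 0 2 2) ∧ η i = t} =
    Module.finrank ℂ (Module.End.eigenspace (Matrix.mulVecLin (Γ.localAdj x)) (t : ℂ))

/-- The subconstituent (Terwilliger) algebra `T = T(x)`, generated by the adjacency
matrix together with the dual idempotents `E_0*, …, E_D*`. -/
def Talg (x : α) : Subalgebra ℂ (Matrix α α ℂ) :=
  Algebra.adjoin ℂ ({Γ.Amat 1} ∪ Set.range (Γ.Estar x))

/-- A `T`-module: a `T`-invariant subspace of the standard module `ℂ^X`. -/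
def IsTModule (x : α) (W : Submodule ℂ (α → ℂ)) : Prop :=
  ∀ B ∈ Γ.Talg x, ∀ w ∈ W, B.mulVec w ∈ W

/-- An irreducible `T`-module. -/
def IsIrreducibleTModule (x : α) (W : Submodule ℂ (α → ℂ)) : Prop :=
  W ≠ ⊥ ∧ Γ.IsTModule x W ∧
    ∀ W' : Submodule ℂ (α → ℂ), W' ≤ W → Γ.IsTModule x W' → W' = ⊥ ∨ W' = W

/-- The endpoint of a `T`-module `W` is `min {i : E_i* W ≠ 0}`. -/
def HasEndpoint (x : α) (W : Submodule ℂ (α → ℂ)) (e : ℕ) : Prop :=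
  (∃ w ∈ W, (Γ.Estar x e).mulVec w ≠ 0) ∧
  ∀ i : ℕ, i < e → ∀ w ∈ W, (Γ.Estar x i).mulVec w = 0

/-- A `T`-module `W` is thin whenever `dim E_i* W ≤ 1` for all `i`. -/
def IsThin (x : α) (W : Submodule ℂ (α → ℂ)) : Prop :=
  ∀ i : ℕ, Module.finrank ℂ (W.map (Matrix.mulVecLin (Γ.Estar x i))) ≤ 1

/-- `W` has local eigenvalue `η`: every vector of `E_2* W` is an eigenvector of
`E_2* A_2 E_2*` with eigenvalue `η`. -/
def HasLocalEig (x : α) (W : Submodule ℂ (α → ℂ)) (η : ℝ) : Prop :=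
  ∀ w ∈ W, (Γ.Estar x 2 * Γ.Amat 2 * Γ.Estar x 2).mulVec w =
    (η : ℂ) • ((Γ.Estar x 2).mulVec w)

/-- Membership in `U`, the orthogonal complement of `E_2* V_0 + E_2* Y` in `E_2* V`,
where `V_0` is the (unique) irreducible `T`-module with endpoint `0` and `Y` is the
span of the irreducible `T`-modules with endpoint `1`. -/
def memU (x : α) (V0 : Submodule ℂ (α → ℂ)) (v : α → ℂ) : Prop :=
  (Γ.Estar x 2).mulVec v = v ∧
  (∀ w ∈ V0, BDRG.dotp v ((Γ.Estar x 2).mulVec w) = 0) ∧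
  ∀ W : Submodule ℂ (α → ℂ), Γ.IsIrreducibleTModule x W → Γ.HasEndpoint x W 1 →
    ∀ w ∈ W, BDRG.dotp v ((Γ.Estar x 2).mulVec w) = 0

/-- Membership in `U_η = {v ∈ U : E_2* A_2 E_2* v = η v}`. -/
def memUeta (x : α) (V0 : Submodule ℂ (α → ℂ)) (η : ℝ) (v : α → ℂ) : Prop :=
  Γ.memU x V0 v ∧ (Γ.Estar x 2 * Γ.Amat 2 * Γ.Estar x 2).mulVec v = (η : ℂ) • v

/-- The subspace `M v` of the standard module, where `M` is the Bose–Mesner algebra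
(the subalgebra of `Mat_X(ℂ)` generated by the adjacency matrix). -/
def Mspan (v : α → ℂ) : Submodule ℂ (α → ℂ) :=
  Submodule.span ℂ
    {w | ∃ B ∈ Algebra.adjoin ℂ ({Γ.Amat 1} : Set (Matrix α α ℂ)), w = B.mulVec v}

/-- Isomorphism of `T`-modules: a linear bijection `W → W'` commuting with every
element of `T`. -/
def TIso (x : α) (W W' : Submodule ℂ (α → ℂ)) : Prop :=
  ∃ σ : (α → ℂ) →ₗ[ℂ] (α → ℂ), Set.BijOn σ (W : Set (α → ℂ)) (W' : Set (α → ℂ)) ∧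
    ∀ B ∈ Γ.Talg x, ∀ w ∈ W, σ (B.mulVec w) = B.mulVec (σ w)

/-- The scalar `Δ = (k-2)(c_3-1) - (c_2-1) p²₂₂`. -/
def Delta : ℝ := (Γ.k - 2) * (Γ.c 3 - 1) - (Γ.c 2 - 1) * (Γ.p 2 2 2 : ℝ)

/-- `Γ` is taut (with respect to the eigenvalue sequence `θ`): `Δ ≠ 0` and equality
holds in MacLean's fundamental bound. -/
def IsTaut (θ : ℕ → ℝ) : Prop :=
  Γ.Delta ≠ 0 ∧
  Γ.b 3 * (Γ.b 2 * (Γ.k - 2) - (Γ.c 2 - 1) * (θ 1) ^ 2) *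
      (Γ.b 2 * (Γ.k - 2) - (Γ.c 2 - 1) * (θ (Γ.D / 2)) ^ 2) =
    Γ.b 1 * Γ.Delta * ((θ 1) ^ 2 - Γ.b 2) * (Γ.b 2 - (θ (Γ.D / 2)) ^ 2)

/-- `Γ` is spectrally taut with respect to `x`: each local eigenvalue `η_i`
with `k+1 ≤ i ≤ k₂` equals `θ̃_1` or `θ̃_d`. -/
def SpectrallyTaut (x : α) (θ : ℕ → ℝ) : Prop :=
  ∃ η : ℕ → ℝ, Γ.IsLocalEigSeq x η ∧
    ∀ i : ℕ, Γ.p 0 1 1 + 1 ≤ i → i ≤ Γ.p 0 2 2 →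
      η i = Γ.tilde (θ 1) ∨ η i = Γ.tilde (θ (Γ.D / 2))

/-- `Γ` is taut with respect to `x`: every irreducible `T(x)`-module with endpoint 2
is thin with local eigenvalue `θ̃_1` or `θ̃_d`. -/
def TautWrt (x : α) (θ : ℕ → ℝ) : Prop :=
  ∀ W : Submodule ℂ (α → ℂ), Γ.IsIrreducibleTModule x W → Γ.HasEndpoint x W 2 →
    Γ.IsThin x W ∧
      (Γ.HasLocalEig x W (Γ.tilde (θ 1)) ∨ Γ.HasLocalEig x W (Γ.tilde (θ (Γ.D / 2))))

end BDRG

section Aux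

variable {α : Type} [Fintype α] [DecidableEq α]

private lemma walk_dist_bound (G : SimpleGraph α) (hc : G.Connected)
    {u w : α} (p : G.Walk u w) :
    ∀ j, j ≤ p.length →
      G.dist u (p.getVert j) ≤ j ∧ G.dist (p.getVert j) w ≤ p.length - j := by
  induction p with
  | nil =>
    intro j hj
    simp only [SimpleGraph.Walk.length_nil, Nat.le_zero] at hj
    subst hj
    simp [SimpleGraph.Walk.getVert_zero, SimpleGraph.dist_self]
  | @cons u u' w hadj q ih =>
    intro j hj
    cases j with
    | zero =>
      refine ⟨by simp [SimpleGraph.dist_self], ?_⟩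
      simpa using SimpleGraph.dist_le (SimpleGraph.Walk.cons hadj q)
    | succ j' =>
      rw [SimpleGraph.Walk.getVert_cons_succ]
      have hj' : j' ≤ q.length := by
        simpa [SimpleGraph.Walk.length_cons] using hj
      obtain ⟨h1, h2⟩ := ih j' hj'
      constructor
      · have ht : G.dist u (q.getVert j') ≤ G.dist u u' + G.dist u' (q.getVert j') :=
          hc.dist_triangle
        have hd1 : G.dist u u' = 1 := SimpleGraph.dist_eq_one_iff_adj.mpr hadj
        omega
      · have : (SimpleGraph.Walk.cons hadj q).length = q.length + 1 := by
          simp [SimpleGraph.Walk.length_cons]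
        omega

private lemma exists_intermediate (G : SimpleGraph α) (hc : G.Connected)
    {u w : α} {n j : ℕ} (h : G.dist u w = n) (hj : j ≤ n) :
    ∃ z : α, G.dist u z = j ∧ G.dist z w = n - j := by
  obtain ⟨p, hp⟩ := (hc u w).exists_walk_length_eq_dist
  refine ⟨p.getVert j, ?_⟩
  obtain ⟨h1, h2⟩ := walk_dist_bound G hc p j (by omega)
  have ht : G.dist u w ≤ G.dist u (p.getVert j) + G.dist (p.getVert j) w :=
    hc.dist_triangle
  omega

namespace BDRG

variable (Γ : BDRG α)

private lemma dist_parity (a b c : α) :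
    (Γ.G.dist a b + Γ.G.dist a c + Γ.G.dist c b) % 2 = 0 := by
  have hcard := Γ.hp (Γ.G.dist a b) (Γ.G.dist a c) (Γ.G.dist c b)
      (Γ.hdist a b) (Γ.hdist a c) (Γ.hdist c b) a b rfl
  have hne : Nonempty {z : α // Γ.G.dist a z = Γ.G.dist a c ∧ Γ.G.dist z b = Γ.G.dist c b} :=
    ⟨⟨c, rfl, rfl⟩⟩
  have hpos : 0 < Nat.card {z : α // Γ.G.dist a z = Γ.G.dist a c ∧ Γ.G.dist z b = Γ.G.dist c b} :=
    Nat.card_pos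
  by_contra hodd
  have h0 := Γ.hbip (Γ.G.dist a b) (Γ.G.dist a c) (Γ.G.dist c b)
      (Γ.hdist a b) (Γ.hdist a c) (Γ.hdist c b) (Nat.odd_iff.mpr (by omega))
  omega

private lemma exists_pair_dist {m : ℕ} (hm : m ≤ Γ.D) :
    ∃ u w : α, Γ.G.dist u w = m := by
  obtain ⟨u, w, hD⟩ := Γ.hdiam
  obtain ⟨z, hz, -⟩ := exists_intermediate Γ.G Γ.hconn hD hm
  exact ⟨u, z, hz⟩

private lemma c_pos {m : ℕ} (h1 : 1 ≤ m) (hm : m ≤ Γ.D) : (0:ℝ) < Γ.c m := by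
  obtain ⟨u, w, huw⟩ := Γ.exists_pair_dist hm
  have hcard := Γ.hp m 1 (m-1) hm (by omega) (by omega) u w huw
  obtain ⟨z, hz1, hz2⟩ := exists_intermediate Γ.G Γ.hconn huw h1
  have hne : Nonempty {z : α // Γ.G.dist u z = 1 ∧ Γ.G.dist z w = m - 1} := ⟨⟨z, hz1, hz2⟩⟩
  have hpos : 0 < Nat.card {z : α // Γ.G.dist u z = 1 ∧ Γ.G.dist z w = m - 1} := Nat.card_pos
  rw [BDRG.c, if_neg (by omega)]
  exact_mod_cast (by omega : 0 < Γ.p m 1 (m-1))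

private lemma amat_zero : Γ.Amat 0 = 1 := by
  ext y z
  simp only [BDRG.Amat, Matrix.of_apply, Matrix.one_apply]
  by_cases h : y = z
  · simp [h, SimpleGraph.dist_self]
  · rw [if_neg (fun hd => h (Γ.hconn.dist_eq_zero_iff.mp hd)), if_neg h]

private lemma amul {h : ℕ} (h1 : 1 ≤ h) (hD : h + 1 ≤ Γ.D) :
    Γ.Amat 1 * Γ.Amat h = Γ.b (h-1) • Γ.Amat (h-1) + Γ.c (h+1) • Γ.Amat (h+1) := by
  ext y w
  have hyw : Γ.G.dist y w ≤ Γ.D := Γ.hdist y w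
  rw [Matrix.mul_apply]
  have hterm : ∀ z : α, Γ.Amat 1 y z * Γ.Amat h z w
      = if Γ.G.dist y z = 1 ∧ Γ.G.dist z w = h then (1:ℂ) else 0 := by
    intro z
    show (if Γ.G.dist y z = 1 then (1:ℂ) else 0) * (if Γ.G.dist z w = h then (1:ℂ) else 0)
        = if Γ.G.dist y z = 1 ∧ Γ.G.dist z w = h then (1:ℂ) else 0
    by_cases ha : Γ.G.dist y z = 1 <;> by_cases hb : Γ.G.dist z w = h
    · rw [if_pos ha, if_pos hb, if_pos ⟨ha, hb⟩, one_mul]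
    · rw [if_pos ha, if_neg hb, mul_zero, if_neg (by exact fun hcon => hb hcon.2)]
    · rw [if_neg ha, zero_mul, if_neg (by exact fun hcon => ha hcon.1)]
    · rw [if_neg ha, zero_mul, if_neg (by exact fun hcon => ha hcon.1)]
  simp only [hterm]
  rw [Finset.sum_boole]
  have hcount : ∀ m : ℕ, Γ.G.dist y w = m → m ≤ Γ.D →
      ({z ∈ Finset.univ | Γ.G.dist y z = 1 ∧ Γ.G.dist z w = h} : Finset α).card
        = Γ.p m 1 h := by
    intro m hym hmD
    have := Γ.hp m 1 h hmD (by omega) (by omega) y w hym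
    rw [← this, Nat.card_eq_fintype_card, Fintype.card_subtype]
  simp only [Matrix.add_apply, Matrix.smul_apply, BDRG.Amat, Matrix.of_apply]
  by_cases hj1 : Γ.G.dist y w = h - 1
  · rw [hcount (h-1) hj1 (by omega)]
    have hb : Γ.b (h-1) = (Γ.p (h-1) 1 h : ℝ) := by
      rw [BDRG.b, if_neg (by omega)]
      congr 2
      omega
    rw [if_pos hj1, if_neg (by omega : ¬ Γ.G.dist y w = h + 1), smul_zero, add_zero, hb,
      Complex.real_smul, mul_one]
    norm_cast
  · by_cases hj2 : Γ.G.dist y w = h + 1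
    · rw [hcount (h+1) hj2 (by omega)]
      have hcc : Γ.c (h+1) = (Γ.p (h+1) 1 h : ℝ) := by
        rw [BDRG.c, if_neg (by omega)]
        simp
      rw [if_neg (by omega : ¬ Γ.G.dist y w = h - 1), if_pos hj2, smul_zero, zero_add, hcc,
        Complex.real_smul, mul_one]
      norm_cast
    · have hempty : ({z ∈ Finset.univ | Γ.G.dist y z = 1 ∧ Γ.G.dist z w = h} : Finset α) = ∅ := by
        apply Finset.filter_eq_empty_iff.mpr
        rintro z - ⟨ha, hb⟩
        have ht1 : Γ.G.dist y w ≤ Γ.G.dist y z + Γ.G.dist z w := Γ.hconn.dist_triangle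
        have ht2 : Γ.G.dist z w ≤ Γ.G.dist z y + Γ.G.dist y w := Γ.hconn.dist_triangle
        have hcomm : Γ.G.dist z y = Γ.G.dist y z := SimpleGraph.dist_comm
        have hpar := Γ.dist_parity y w z
        omega
      rw [hempty, if_neg hj1, if_neg hj2, smul_zero, smul_zero]
      simp

private lemma smul_real_complex (r : ℝ) (M : Matrix α α ℂ) :
    (algebraMap ℝ (Matrix α α ℂ) r) * M = r • M := (Algebra.smul_def r M).symm

private lemma fA : ∀ h, h ≤ Γ.D → Polynomial.aeval (Γ.Amat 1) (Γ.f h) = Γ.Amat h := by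
  intro h
  induction h using Nat.strong_induction_on with
  | _ h ih =>
    rcases h with (_|_|m)
    · intro _
      show Polynomial.aeval (Γ.Amat 1) (Γ.f 0) = Γ.Amat 0
      rw [show Γ.f 0 = 1 from rfl, _root_.map_one, Γ.amat_zero]
    · intro _
      show Polynomial.aeval (Γ.Amat 1) (Γ.f 1) = Γ.Amat 1
      rw [show Γ.f 1 = Polynomial.X from rfl, Polynomial.aeval_X]
    · intro hD
      show Polynomial.aeval (Γ.Amat 1) (Γ.f (m + 2)) = Γ.Amat (m + 2)
      have hD' : m + 2 ≤ Γ.D := hD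
      have ih1 := ih m (by omega) (by omega)
      have ih2 := ih (m+1) (by omega) (by omega)
      have hmul := Γ.amul (h := m + 1) (by omega) (by omega)
      have hsimp : m + 1 - 1 = m := by omega
      rw [hsimp] at hmul
      rw [show Γ.f (m+2) = Polynomial.C (Γ.c (m + 2))⁻¹ *
          (Polynomial.X * Γ.f (m + 1) - Polynomial.C (Γ.b m) * Γ.f m) from rfl]
      rw [_root_.map_mul, _root_.map_sub, _root_.map_mul, _root_.map_mul, Polynomial.aeval_X, Polynomial.aeval_C,
        Polynomial.aeval_C, ih1, ih2, smul_real_complex, smul_real_complex, hmul,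
        add_sub_cancel_left, smul_smul,
        inv_mul_cancel₀ (ne_of_gt (Γ.c_pos (by omega) (by omega))), one_smul]

private lemma ppA {i : ℕ} (hi : i ≤ Γ.D) :
    Polynomial.aeval (Γ.Amat 1) (Γ.pp i)
      = ∑ h ∈ Finset.range (i+1), if (i - h) % 2 = 0 then Γ.Amat h else 0 := by
  rw [BDRG.pp, map_sum]
  refine Finset.sum_congr rfl fun h hh => ?_
  rw [Finset.mem_range] at hh
  rw [apply_ite (Polynomial.aeval (Γ.Amat 1)), map_zero, Γ.fA h (by omega)]

private lemma estar_mulVec (x : α) (m : ℕ) (w : α → ℂ) (y : α) :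
    ((Γ.Estar x m).mulVec w) y = if Γ.G.dist x y = m then w y else 0 := by
  simp only [BDRG.Estar, Matrix.mulVec, dotProduct, Matrix.of_apply]
  rw [Finset.sum_eq_single y (fun z _ hz => by simp [Ne.symm hz]) (fun hy => absurd (Finset.mem_univ y) hy)]
  by_cases h : Γ.G.dist x y = m <;> simp [h]

end BDRG

end Aux

/-- `p_i(A) v = E*_(i+2) A_i v - E*_i A_(i+2) v`. -/
theorem statement_12 {α : Type} [Fintype α] [DecidableEq α] (Γ : BDRG α)
    (x : α) (v : α → ℂ)
    (hv2 : (Γ.Estar x 2).mulVec v = v)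
    (hvs : BDRG.dotp v (Γ.s2vec x) = 0) :
    (∀ i : ℕ, i ≤ Γ.D - 2 →
      (Polynomial.aeval (Γ.Amat 1) (Γ.pp i)).mulVec v =
        (Γ.Estar x (i + 2) * Γ.Amat i).mulVec v -
          (Γ.Estar x i * Γ.Amat (i + 2)).mulVec v) ∧
    (Polynomial.aeval (Γ.Amat 1) (Γ.pp (Γ.D - 1))).mulVec v = 0 ∧
    (Polynomial.aeval (Γ.Amat 1) (Γ.pp Γ.D)).mulVec v = 0 := by
  have hD4 : 4 ≤ Γ.D := Γ.hD
  -- v is supported on the sphere of radius 2 around x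
  have vs : ∀ z : α, Γ.G.dist x z ≠ 2 → v z = 0 := by
    intro z hz
    have h := congrFun hv2 z
    rw [Γ.estar_mulVec x 2 v z, if_neg hz] at h
    exact h.symm
  -- the sum of the entries of v is 0
  have sumv : ∑ z : α, v z = 0 := by
    have h : ∑ z : α, v z = BDRG.dotp v (Γ.s2vec x) := by
      rw [BDRG.dotp]
      refine Finset.sum_congr rfl fun z _ => ?_
      by_cases hz : Γ.G.dist x z = 2
      · simp [BDRG.s2vec, hz]
      · simp [BDRG.s2vec, hz, vs z hz]
    rw [h, hvs]
  set S : α → ℕ → ℂ := fun y h => ((Γ.Amat h).mulVec v) y with hSdef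
  have hSapp : ∀ (y : α) (h : ℕ), S y h = ((Γ.Amat h).mulVec v) y := fun y h => by rw [hSdef]
  have Samat : ∀ (y : α) (h : ℕ), S y h = ∑ z : α, if Γ.G.dist y z = h then v z else 0 := by
    intro y h
    rw [hSapp]
    simp [Matrix.mulVec, dotProduct, BDRG.Amat, ite_mul, one_mul, zero_mul]
  have Skey : ∀ (y : α) (h : ℕ), S y h ≠ 0 →
      (Γ.G.dist x y + h) % 2 = 0 ∧ Γ.G.dist x y ≤ h + 2 ∧ h ≤ Γ.G.dist x y + 2 ∧ h ≤ Γ.D := by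
    intro y h hS
    obtain ⟨z, hz2, hzy⟩ : ∃ z : α, Γ.G.dist x z = 2 ∧ Γ.G.dist y z = h := by
      by_contra hno
      push_neg at hno
      apply hS
      rw [Samat]
      refine Finset.sum_eq_zero fun z _ => ?_
      split_ifs with hdz
      · by_cases h2 : Γ.G.dist x z = 2
        · exact absurd hdz (hno z h2)
        · exact vs z h2
      · rfl
    have hpar := Γ.dist_parity x y z
    have ht1 : Γ.G.dist x y ≤ Γ.G.dist x z + Γ.G.dist z y := Γ.hconn.dist_triangle
    have ht2 : Γ.G.dist y z ≤ Γ.G.dist y x + Γ.G.dist x z := Γ.hconn.dist_triangle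
    have hc1 : Γ.G.dist z y = Γ.G.dist y z := SimpleGraph.dist_comm
    have hc2 : Γ.G.dist y x = Γ.G.dist x y := SimpleGraph.dist_comm
    have hhD : Γ.G.dist y z ≤ Γ.D := Γ.hdist y z
    omega
  have Stot : ∀ y : α, ∑ h ∈ Finset.range (Γ.D + 1), S y h = 0 := by
    intro y
    rw [Finset.sum_congr rfl fun h _ => Samat y h, Finset.sum_comm]
    have hinner : ∀ z : α,
        (∑ h ∈ Finset.range (Γ.D + 1), if Γ.G.dist y z = h then v z else 0) = v z := by
      intro z
      rw [Finset.sum_ite_eq (Finset.range (Γ.D+1)) (Γ.G.dist y z) (fun _ => v z),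
        if_pos (Finset.mem_range.mpr (by have := Γ.hdist y z; omega))]
    rw [Finset.sum_congr rfl fun z _ => hinner z, sumv]
  have hTsum : ∀ y : α, ∑ h ∈ Finset.range (Γ.D + 3), S y h = 0 := by
    intro y
    rw [← Finset.sum_subset (Finset.range_subset_range.mpr (by omega : Γ.D + 1 ≤ Γ.D + 3))
      (fun h _ hh => by
        simp only [Finset.mem_range, not_lt] at hh
        by_contra hS
        have := Skey y h hS
        omega)]
    exact Stot y
  have main : ∀ i, i ≤ Γ.D → ∀ y : α,
      (∑ h ∈ Finset.range (i+1), if (i - h) % 2 = 0 then S y h else 0)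
        = (if Γ.G.dist x y = i + 2 then S y i else 0)
          - (if Γ.G.dist x y = i then S y (i+2) else 0) := by
    intro i hi y
    have hjD : Γ.G.dist x y ≤ Γ.D := Γ.hdist x y
    have hL : (∑ h ∈ Finset.range (i+1), if (i - h) % 2 = 0 then S y h else 0)
        = ∑ h ∈ Finset.filter (fun h => h ≤ i ∧ (i - h) % 2 = 0) (Finset.range (Γ.D+3)), S y h := by
      rw [Finset.sum_filter]
      rw [← Finset.sum_subset (Finset.range_subset_range.mpr (by omega : i + 1 ≤ Γ.D + 3))
        (fun h _ hh => by
          simp only [Finset.mem_range, not_lt] at hh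
          rw [if_neg (by omega)])]
      refine Finset.sum_congr rfl fun h hh => ?_
      rw [Finset.mem_range] at hh
      by_cases hc : (i - h) % 2 = 0
      · rw [if_pos hc, if_pos ⟨by omega, hc⟩]
      · rw [if_neg hc, if_neg (by tauto)]
    rw [hL]
    by_cases hpar : (i + Γ.G.dist x y) % 2 = 0
    · by_cases hcase1 : Γ.G.dist x y = i + 2
      · have hsum : (∑ h ∈ Finset.filter (fun h => h ≤ i ∧ (i - h) % 2 = 0)
            (Finset.range (Γ.D+3)), S y h) = S y i := by
          apply Finset.sum_eq_single
          · intro a ha hne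
            simp only [Finset.mem_filter, Finset.mem_range] at ha
            by_contra hS
            have := Skey y a hS
            omega
          · intro hni
            exact absurd (Finset.mem_filter.mpr
              ⟨Finset.mem_range.mpr (by omega), le_refl i, by omega⟩) hni
        rw [hsum, if_pos hcase1, if_neg (by omega), sub_zero]
      · by_cases hcase2 : Γ.G.dist x y = i
        · have hsplit := Finset.sum_filter_add_sum_filter_not (Finset.range (Γ.D+3))
            (fun h => h ≤ i ∧ (i - h) % 2 = 0) (fun h => S y h)
          rw [hTsum y] at hsplit
          have hnot : (∑ h ∈ Finset.filter (fun h => ¬(h ≤ i ∧ (i - h) % 2 = 0))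
              (Finset.range (Γ.D+3)), S y h) = S y (i+2) := by
            apply Finset.sum_eq_single
            · intro a ha hne
              simp only [Finset.mem_filter, Finset.mem_range, not_and] at ha
              obtain ⟨haR, haP⟩ := ha
              by_contra hS
              have hk := Skey y a hS
              by_cases hai : a ≤ i
              · have := haP hai; omega
              · omega
            · intro hni
              exact absurd (Finset.mem_filter.mpr
                ⟨Finset.mem_range.mpr (by omega), by omega⟩) hni
          rw [hnot] at hsplit
          rw [if_neg hcase1, if_pos hcase2, zero_sub]
          linear_combination hsplit
        · rw [if_neg hcase1, if_neg hcase2, sub_zero]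
          by_cases hbig : i + 2 < Γ.G.dist x y
          · refine Finset.sum_eq_zero fun a ha => ?_
            simp only [Finset.mem_filter, Finset.mem_range] at ha
            by_contra hS
            have := Skey y a hS
            omega
          · have hsplit := Finset.sum_filter_add_sum_filter_not (Finset.range (Γ.D+3))
              (fun h => h ≤ i ∧ (i - h) % 2 = 0) (fun h => S y h)
            rw [hTsum y] at hsplit
            have hnot : (∑ h ∈ Finset.filter (fun h => ¬(h ≤ i ∧ (i - h) % 2 = 0))
                (Finset.range (Γ.D+3)), S y h) = 0 := by
              refine Finset.sum_eq_zero fun a ha => ?_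
              simp only [Finset.mem_filter, Finset.mem_range, not_and] at ha
              obtain ⟨haR, haP⟩ := ha
              by_contra hS
              have hk := Skey y a hS
              by_cases hai : a ≤ i
              · have := haP hai; omega
              · omega
            rw [hnot] at hsplit
            linear_combination hsplit
    · rw [if_neg (by omega), if_neg (by omega), sub_zero]
      refine Finset.sum_eq_zero fun a ha => ?_
      simp only [Finset.mem_filter, Finset.mem_range] at ha
      by_contra hS
      have := Skey y a hS
      omega
  -- distributing mulVec over sums of matrices
  have hml : ∀ (s : Finset ℕ) (M : ℕ → Matrix α α ℂ),
      (∑ h ∈ s, M h).mulVec v = ∑ h ∈ s, (M h).mulVec v := by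
    intro s M
    induction s using Finset.cons_induction with
    | empty => simp [Matrix.zero_mulVec]
    | cons a s ha ih => rw [Finset.sum_cons, Finset.sum_cons, Matrix.add_mulVec, ih]
  have hred : ∀ i, i ≤ Γ.D → (Polynomial.aeval (Γ.Amat 1) (Γ.pp i)).mulVec v
      = fun y => (if Γ.G.dist x y = i + 2 then S y i else 0)
          - (if Γ.G.dist x y = i then S y (i+2) else 0) := by
    intro i hiD
    funext y
    rw [Γ.ppA hiD, hml, Finset.sum_apply]
    have hstep : ∀ h ∈ Finset.range (i+1),
        ((if (i - h) % 2 = 0 then Γ.Amat h else 0).mulVec v) y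
          = if (i - h) % 2 = 0 then S y h else 0 := by
      intro h _
      by_cases hc : (i - h) % 2 = 0
      · rw [if_pos hc, if_pos hc, hSapp]
      · rw [if_neg hc, if_neg hc, Matrix.zero_mulVec]
        rfl
    rw [Finset.sum_congr rfl hstep, main i hiD y]
  refine ⟨?_, ?_, ?_⟩
  · intro i hi
    rw [hred i (by omega)]
    funext y
    simp only [Pi.sub_apply, ← Matrix.mulVec_mulVec]
    rw [Γ.estar_mulVec x (i+2) ((Γ.Amat i).mulVec v) y,
      Γ.estar_mulVec x i ((Γ.Amat (i+2)).mulVec v) y, hSapp y i, hSapp y (i+2)]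
  · rw [hred (Γ.D - 1) (by omega)]
    funext y
    have hjD := Γ.hdist x y
    have h2 : S y (Γ.D - 1 + 2) = 0 := by
      by_contra hS
      have := Skey y _ hS
      omega
    rw [if_neg (by omega : ¬ Γ.G.dist x y = Γ.D - 1 + 2), h2]
    simp
  · rw [hred Γ.D (le_refl _)]
    funext y
    have hjD := Γ.hdist x y
    have h2 : S y (Γ.D + 2) = 0 := by
      by_contra hS
      have := Skey y _ hS
      omega
    rw [if_neg (by omega : ¬ Γ.G.dist x y = Γ.D + 2), h2]
    simp
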